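/- arXiv:2107.09421 — 5 statements merged into one kernel-verified Lean document; each statement's English description precedes it below -/
import Mathlib

section
/- For any word w and any position p of w, a repetition word of w at p whose length equals the minimal local period per(w,p) is unique, and it is unbordered. -/
namespace CritFact

/-- A word is square-free if it contains no factor `v ++ v` with `v` nonempty. -/
def SqFree {α : Type*} (w : List α) : Prop :=
  ∀ v : List α, v ≠ [] → ¬ (v ++ v) <:+: w

/-- A position in `w` is an integer `p` with `1 ≤ p < |w|`. -/
def IsPos {α : Type*} (w : List α) (p : ℕ) : Prop :=
  1 ≤ p ∧ p < w.length

/-- `u` is a repetition word of `w` at position `p` (with `w = x ++ y`, `|x| = p`):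
`u` is nonempty, one of `u`, `x` is a suffix of the other, and one of `u`, `y` is a
prefix of the other. -/
def IsRepWord {α : Type*} (w : List α) (p : ℕ) (u : List α) : Prop :=
  u ≠ [] ∧ (u <:+ w.take p ∨ w.take p <:+ u) ∧ (u <+: w.drop p ∨ w.drop p <+: u)

/-- The minimal local period of `w` at position `p`. -/
noncomputable def locPer {α : Type*} (w : List α) (p : ℕ) : ℕ :=
  sInf {n | ∃ u : List α, IsRepWord w p u ∧ u.length = n}

/-- `q` is a period of `w` if `q > 0` and `w[i] = w[i+q]` whenever both are defined. -/
def HasPeriod {α : Type*} (w : List α) (q : ℕ) : Prop :=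
  0 < q ∧ ∀ i : ℕ, i + q < w.length → w[i]? = w[i + q]?

/-- The minimal period of `w`. -/
noncomputable def per {α : Type*} (w : List α) : ℕ :=
  sInf {q | HasPeriod w q}

/-- A position `p` of `w` is critical if the minimal local period at `p` equals
the global period of `w`. -/
def IsCritical {α : Type*} (w : List α) (p : ℕ) : Prop :=
  IsPos w p ∧ locPer w p = per w

open Classical in
/-- `eta w` is the number of critical positions of `w`. -/
noncomputable def eta {α : Type*} (w : List α) : ℕ :=
  ((Finset.Ico 1 w.length).filter (fun p => IsCritical w p)).card

/-- A word is unbordered if no nonempty proper prefix is also a suffix. -/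
def Unbordered {α : Type*} (w : List α) : Prop :=
  ∀ v : List α, v ≠ [] → v ≠ w → ¬ (v <+: w ∧ v <:+ w)

/-- Ternary words. -/
abbrev Word := List (Fin 3)

/-- Thue's morphism `τ(0) = 012`, `τ(1) = 02`, `τ(2) = 1`. -/
def tau (a : Fin 3) : Word :=
  if a = 0 then [0, 1, 2] else if a = 1 then [0, 2] else [1]

/-- The morphism `τ` applied to a word. -/
def tauW (w : Word) : Word := (w.map tau).flatten

/-- The infinite fixed point `m = 012021012102012⋯` of `τ` starting with `0`. -/
def mInf (n : ℕ) : Fin 3 := (tauW^[n + 1] [0]).getD n 0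

/-- `u` is a (finite) factor of the infinite word `m`. -/
def FactorOfM (u : Word) : Prop :=
  ∃ i : ℕ, u = (List.range u.length).map (fun j => mInf (i + j))

/-- `u` is a factor of `m` occurring (starting) after position `i₀`. -/
def FactorOfMAfter (u : Word) (i₀ : ℕ) : Prop :=
  ∃ i : ℕ, i₀ ≤ i ∧ u = (List.range u.length).map (fun j => mInf (i + j))

/-- `mWord n = τ^{2n-1}(0) · τ^{2n-3}(0) ⋯ τ³(0) · τ(0)`. -/
def mWord : ℕ → Word
  | 0 => []
  | n + 1 => tauW^[2 * n + 1] [0] ++ mWord n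

/-- The word `w_x = 0x02x10x02x0`. -/
def wx (x : Word) : Word :=
  [0] ++ x ++ [0, 2] ++ x ++ [1, 0] ++ x ++ [0, 2] ++ x ++ [0]

end CritFact

/-!
Write `w = x ++ y` with `|x| = p`. A repetition word at `p` of length `n ≤ |w|` is pinned
down by `w`: its first `min n |y|` letters are those of `y`, its last `min n |x|` letters
those of `x`, and these two pieces cover it. Since `y ++ x` is a repetition word, `locPer w p ≤ |w|`, whence
uniqueness. A border of a repetition word is again one, so a border of a minimal one would
be a shorter repetition word.
-/

namespace List

variable {α : Type*} {s t u v : List α}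

theorem eq_of_prefix_of_suffix_of_length_le (htu : t <+: u) (htv : t <+: v) (hsu : s <:+ u)
    (hsv : s <:+ v) (huv : u.length = v.length) (hcover : u.length ≤ t.length + s.length) :
    u = v := by
  have hdrop : ∀ {l : List α}, s <:+ l → l.length ≤ t.length + s.length →
      l.drop t.length <:+ s :=
    fun hl hlen => suffix_of_suffix_length_le (drop_suffix _ _) hl (by simp; omega)
  have htails : u.drop t.length = v.drop t.length :=
    (suffix_of_suffix_length_le (hdrop hsu hcover) (hdrop hsv (huv ▸ hcover))
      (by simp [huv])).eq_of_length (by simp [huv])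
  rw [← take_append_drop t.length u, ← take_append_drop t.length v, htails,
    ← prefix_iff_eq_take.1 htu, ← prefix_iff_eq_take.1 htv]

theorem drop_suffix_of_suffix_or_suffix (h : u <:+ v ∨ v <:+ u) :
    v.drop (v.length - u.length) <:+ u := by
  rcases h with h | h
  · rw [← suffix_iff_eq_drop.1 h]
  · rwa [Nat.sub_eq_zero_of_le h.length_le, drop_zero]

theorem take_prefix_of_prefix_or_prefix (h : u <+: v ∨ v <+: u) : v.take u.length <+: u := by
  rcases h with h | h
  · rw [← prefix_iff_eq_take.1 h]
  · rwa [take_of_length_le h.length_le]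

end List

namespace CritFact

variable {α : Type*} {w u v : List α} {p : ℕ}

theorem isRepWord_drop_append_take (hp : p < w.length) :
    IsRepWord w p (w.drop p ++ w.take p) :=
  ⟨by simp; omega, Or.inr (List.suffix_append _ _), Or.inr (List.prefix_append _ _)⟩

theorem IsRepWord.locPer_le (hu : IsRepWord w p u) : locPer w p ≤ u.length :=
  Nat.sInf_le ⟨u, hu, rfl⟩

theorem locPer_le_length (hp : p < w.length) : locPer w p ≤ w.length := by
  have h := IsRepWord.locPer_le (isRepWord_drop_append_take hp)
  rwa [List.length_append, Nat.add_comm, ← List.length_append, List.take_append_drop] at h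

theorem IsRepWord.eq_of_length_eq (hu : IsRepWord w p u) (hv : IsRepWord w p v)
    (huv : u.length = v.length) (hle : u.length ≤ w.length) : u = v := by
  obtain ⟨-, hux, huy⟩ := hu
  obtain ⟨-, hvx, hvy⟩ := hv
  refine List.eq_of_prefix_of_suffix_of_length_le (List.take_prefix_of_prefix_or_prefix huy)
    (huv ▸ List.take_prefix_of_prefix_or_prefix hvy) (List.drop_suffix_of_suffix_or_suffix hux)
    (huv ▸ List.drop_suffix_of_suffix_or_suffix hvx) huv ?_
  simp only [List.length_take, List.length_drop]
  omega

theorem IsRepWord.of_prefix_of_suffix (hu : IsRepWord w p u) (hv : v ≠ []) (hpre : v <+: u)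
    (hsuf : v <:+ u) : IsRepWord w p v := by
  obtain ⟨-, hux, huy⟩ := hu
  refine ⟨hv, ?_, ?_⟩
  · rcases hux with h | h
    · exact Or.inl (hsuf.trans h)
    · exact List.suffix_or_suffix_of_suffix hsuf h
  · rcases huy with h | h
    · exact Or.inl (hpre.trans h)
    · exact List.prefix_or_prefix_of_prefix hpre h

theorem IsRepWord.unbordered_of_length_eq_locPer (hu : IsRepWord w p u)
    (hlen : u.length = locPer w p) : Unbordered u := by
  rintro v hv hvu ⟨hpre, hsuf⟩
  have hshorter : v.length < u.length :=
    lt_of_le_of_ne hpre.length_le fun h => hvu (hpre.eq_of_length h)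
  have hmin := (hu.of_prefix_of_suffix hv hpre hsuf).locPer_le
  omega

end CritFact

/-- a repetition word of `w` at a position `p` whose length equals the
minimal local period `per(w,p)` is unique, and it is unbordered. -/
theorem min_rep_word_unique_and_unbordered {α : Type*} (w : List α) (p : ℕ)
    (hp : CritFact.IsPos w p) (u : List α)
    (hu : CritFact.IsRepWord w p u) (hlen : u.length = CritFact.locPer w p) :
    (∀ u' : List α, CritFact.IsRepWord w p u' → u'.length = CritFact.locPer w p → u' = u) ∧
    CritFact.Unbordered u := by
  have hle : u.length ≤ w.length := hlen ▸ CritFact.locPer_le_length hp.2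
  refine ⟨fun u' hu' hlen' => ?_, hu.unbordered_of_length_eq_locPer hlen⟩
  exact (hu.eq_of_length_eq hu' (hlen.trans hlen'.symm) hle).symm
end

section
/- Let w = xy with |x| = p a position of w, and let u be a repetition word of w at p with |u| = per(w,p). If u has both left overflow (|u| > |x|) and right overflow (|u| > |y|) at p, then p is a critical point of w. -/
/-!
Both overflows force `x` to be a suffix and `y` a prefix of `u`, so `x ++ y` is a factor of
`u ++ u` and `|u|` is a period of `w`; hence `per w ≤ per(w, p)`. Conversely, a period `q ≤ |w|`
gives a repetition word of length `q` at every position, read off the periodic extension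
`w.take q ++ w`; hence `per(w, p) ≤ per w`.
-/

namespace CritFact

variable {α : Type*}

theorem hasPeriod_iff {w : List α} {q : ℕ} : HasPeriod w q ↔ 0 < q ∧ w.HasPeriod q := by
  rw [HasPeriod, List.hasPeriod_iff_getElem?]
  refine and_congr_right fun _ => forall_congr' fun i => ?_
  constructor <;> intro h hi <;> exact h (by omega)

theorem hasPeriod_length {w : List α} (hw : w ≠ []) : HasPeriod w w.length :=
  hasPeriod_iff.2 ⟨List.length_pos_iff.2 hw, List.hasPeriod_of_length_le w _ le_rfl⟩

theorem per_le {w : List α} {q : ℕ} (hq : HasPeriod w q) : per w ≤ q := Nat.sInf_le hq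

theorem hasPeriod_per {w : List α} (hw : w ≠ []) : HasPeriod w (per w) :=
  Nat.sInf_mem (s := {q | HasPeriod w q}) ⟨_, hasPeriod_length hw⟩

theorem hasPeriod_append_of_suffix_of_prefix {x y u : List α} (hu : u ≠ []) (hx : x <:+ u)
    (hy : y <+: u) : HasPeriod (x ++ y) u.length := by
  have huu : (u ++ u).HasPeriod u.length := by
    simpa using (List.hasPeriod_of_length_le u _ le_rfl).take_append _ _ _ (dvd_refl _) le_rfl
  obtain ⟨a, ha⟩ := hx
  obtain ⟨b, hb⟩ := hy
  have hxy : x ++ y <:+: u ++ u :=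
    ⟨a, b, by rw [← List.append_assoc, List.append_assoc (a ++ x), ha, hb]⟩
  exact hasPeriod_iff.2 ⟨List.length_pos_iff.2 hu, huu.infix hxy⟩

/-- The witness is the factor of length `q` at `p` of `W = w.take q ++ w`, which still has
period `q`: it ends where the copy of `w.take p` in `W` ends, and it begins one period before the
copy of `w.drop p`. -/
theorem isRepWord_of_hasPeriod {w : List α} {p q : ℕ} (hq : w.HasPeriod q) (hq0 : 0 < q)
    (hqw : q ≤ w.length) (hpw : p ≤ w.length) :
    IsRepWord w p (((w.take q ++ w).drop p).take q) := by
  set W := w.take q ++ w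
  refine ⟨?_, ?_, ?_⟩
  · rw [← List.length_pos_iff, List.length_take, List.length_drop, List.length_append,
      List.length_take_of_le hqw]
    omega
  · have hv : (W.drop p).take q = (W.take (p + q)).drop p := by
      rw [List.drop_take, Nat.add_sub_cancel_left]
    have hx : w.take p = (W.take (p + q)).drop q := by
      rw [List.drop_take, List.drop_append, List.length_take_of_le hqw]; simp
    rw [hv, hx]
    exact List.suffix_or_suffix_of_suffix (List.drop_suffix _ _) (List.drop_suffix _ _)
  · have hWp : (W.drop p).HasPeriod q :=
      (hq.take_append q q w (dvd_refl q) hqw).infix (List.drop_suffix _ _).isInfix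
    have hy : w.drop p = (W.drop p).drop q := by
      rw [List.drop_drop, List.drop_append, List.length_take_of_le hqw]; simp
    rw [hy]
    exact List.prefix_or_prefix_of_prefix (List.take_prefix _ _) (hWp.drop_prefix q)

theorem locPer_le_of_hasPeriod {w : List α} {p q : ℕ} (hq : HasPeriod w q)
    (hqw : q ≤ w.length) (hpw : p ≤ w.length) : locPer w p ≤ q := by
  obtain ⟨hq0, hq⟩ := hasPeriod_iff.1 hq
  refine Nat.sInf_le ⟨_, isRepWord_of_hasPeriod hq hq0 hqw hpw, ?_⟩
  rw [List.length_take, List.length_drop, List.length_append, List.length_take_of_le hqw]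
  omega

theorem locPer_le_per {w : List α} {p : ℕ} (hw : w ≠ []) (hpw : p ≤ w.length) :
    locPer w p ≤ per w :=
  locPer_le_of_hasPeriod (hasPeriod_per hw) (per_le (hasPeriod_length hw)) hpw

end CritFact

/-- if a minimal repetition word `u` of `w = x ++ y` at `p = |x|` has both
left overflow (`|u| > |x|`) and right overflow (`|u| > |y|`), then `p` is critical. -/
theorem both_overflows_imply_critical {α : Type*} (x y u : List α)
    (hp : CritFact.IsPos (x ++ y) x.length)
    (hu : CritFact.IsRepWord (x ++ y) x.length u)
    (hmin : u.length = CritFact.locPer (x ++ y) x.length)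
    (hleft : u.length > x.length)
    (hright : u.length > y.length) :
    CritFact.IsCritical (x ++ y) x.length := by
  obtain ⟨hne, hsuf, hpre⟩ := hu
  rw [List.take_left] at hsuf
  rw [List.drop_left] at hpre
  have hx : x <:+ u := hsuf.resolve_left fun h => absurd h.length_le (by omega)
  have hy : y <+: u := hpre.resolve_left fun h => absurd h.length_le (by omega)
  have hper : CritFact.per (x ++ y) ≤ CritFact.locPer (x ++ y) x.length :=
    hmin ▸ CritFact.per_le (CritFact.hasPeriod_append_of_suffix_of_prefix hne hx hy)
  have hw : x ++ y ≠ [] := List.ne_nil_of_length_pos (Nat.zero_lt_of_lt hp.2)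
  have hloc := CritFact.locPer_le_per (p := x.length) hw (by simp)
  exact ⟨hp, le_antisymm hloc hper⟩
end

section
/- For every square-free word w over the ternary alphabet {0,1,2} with |w| ≥ 2, the midpoint position M(w) = ⌊(|w|+1)/2⌋ is a critical point of w. -/
/-!
A square-free word `w` has no period `q` with `2q ≤ |w|` (its prefix of length `2q` would be a
square), so `per w ≥ M = ⌈|w|/2⌉` and the period extends across the cut `w = x y` at the
midpoint into a repetition word of length `per w`. Conversely, since `|x|` and `|y|` differ by
at most one, a repetition word `u` at the midpoint either is a suffix of `x` and a prefix of `y`,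
making `u u` a factor of `w`, or has `x` as a suffix and `y` as a prefix, making `|u|` a period.
-/

namespace CritFact

variable {α : Type*}

theorem HasPeriod.drop_eq_take {w : List α} {q : ℕ} (hq : HasPeriod w q) (hqn : q ≤ w.length) :
    w.drop q = w.take (w.length - q) := by
  apply List.ext_getElem?
  intro i
  rw [List.getElem?_drop, List.getElem?_take]
  split
  · rw [Nat.add_comm]
    exact (hq.2 i (by omega)).symm
  · exact List.getElem?_eq_none (by omega)

theorem HasPeriod.take_append_take_prefix {w : List α} {q : ℕ} (hq : HasPeriod w q)
    (h2q : 2 * q ≤ w.length) : w.take q ++ w.take q <+: w := by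
  have hsquare : w.take (2 * q) = w.take q ++ w.take q := by
    rw [← List.take_append_drop q (w.take (2 * q)), List.take_take, List.drop_take,
      hq.drop_eq_take (by omega), List.take_take]
    congr 2 <;> omega
  exact hsquare ▸ List.take_prefix _ _

theorem SqFree.length_lt_two_mul {w : List α} {q : ℕ} (hw : SqFree w) (hq : HasPeriod w q) :
    w.length < 2 * q := by
  by_contra! h2q
  refine hw (w.take q) ?_ (hq.take_append_take_prefix h2q).isInfix
  exact List.ne_nil_of_length_pos (by rw [List.length_take]; have := hq.1; omega)

theorem locPer_eq_of_isRepWord {w u : List α} {p : ℕ} (hu : IsRepWord w p u)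
    (hmin : ∀ v, IsRepWord w p v → u.length ≤ v.length) : locPer w p = u.length := by
  refine le_antisymm (Nat.sInf_le ⟨u, hu, rfl⟩) (le_csInf ⟨_, u, hu, rfl⟩ ?_)
  rintro _ ⟨v, hv, rfl⟩
  exact hmin v hv

theorem append_infix_append_of_suffix_of_prefix {x y u : List α} (hx : u <:+ x) (hy : u <+: y) :
    u ++ u <:+: x ++ y := by
  obtain ⟨a, rfl⟩ := hx
  obtain ⟨b, rfl⟩ := hy
  exact ⟨a, b, by simp⟩

theorem exists_suffix_prefix_of_hasPeriod {x y : List α} {q : ℕ} (hq : HasPeriod (x ++ y) q)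
    (hxq : x.length ≤ q) (hyq : y.length ≤ q) (hqn : q ≤ x.length + y.length) :
    ∃ u : List α, u.length = q ∧ x <:+ u ∧ y <+: u := by
  have hdrop : y.drop (q - x.length) = x.take (x.length + y.length - q) := by
    have := hq.drop_eq_take (by simpa using hqn)
    rwa [List.drop_append, List.drop_eq_nil_of_le (by omega),
      List.nil_append, List.length_append, List.take_append_of_le_length (by omega)] at this
  refine ⟨y.take (q - x.length) ++ x, by rw [List.length_append, List.length_take]; omega,
    List.suffix_append _ _, ?_⟩
  conv_lhs => rw [← List.take_append_drop (q - x.length) y, hdrop]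
  exact (List.prefix_append_right_inj _).mpr (List.take_prefix _ _)

theorem suffix_and_prefix_or_of_length_le_succ {x y u : List α} (hyx : y.length ≤ x.length)
    (hxy : x.length ≤ y.length + 1) (hx : u <:+ x ∨ x <:+ u) (hy : u <+: y ∨ y <+: u) :
    (u <:+ x ∧ u <+: y) ∨ (x <:+ u ∧ y <+: u) := by
  rcases hx with hx | hx <;> rcases hy with hy | hy
  · exact Or.inl ⟨hx, hy⟩
  · have := hx.length_le
    have := hy.length_le
    by_cases h : y.length = u.length
    · exact Or.inl ⟨hx, hy.eq_of_length h ▸ List.prefix_refl _⟩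
    · exact Or.inr ⟨hx.eq_of_length (by omega) ▸ List.suffix_refl _, hy⟩
  · have := hx.length_le
    have := hy.length_le
    exact Or.inl ⟨hx.eq_of_length (by omega) ▸ List.suffix_refl _, hy⟩
  · exact Or.inr ⟨hx, hy⟩

end CritFact

/-- for a square-free ternary word `w` with `|w| ≥ 2`, the midpoint
position `M(w) = ⌊(|w|+1)/2⌋` is critical. -/
theorem midpoint_critical (w : CritFact.Word)
    (hsf : CritFact.SqFree w) (h2 : 2 ≤ w.length) :
    CritFact.IsCritical w ((w.length + 1) / 2) := by
  open CritFact in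
  set M := (w.length + 1) / 2
  have hw : w ≠ [] := List.ne_nil_of_length_pos (by omega)
  have hxlen : (w.take M).length = M := by rw [List.length_take]; omega
  have hylen : (w.drop M).length = w.length - M := List.length_drop
  have hper : HasPeriod (w.take M ++ w.drop M) (per w) := by
    rw [List.take_append_drop]; exact hasPeriod_per hw
  have hMper : M ≤ per w := by
    have := hsf.length_lt_two_mul (hasPeriod_per hw); omega
  obtain ⟨u, hulen, hxu, hyu⟩ := exists_suffix_prefix_of_hasPeriod hper (by omega) (by omega)
    (by have := per_le (hasPeriod_length hw); omega)
  have hu : IsRepWord w M u := ⟨List.ne_nil_of_length_pos (by omega), Or.inr hxu, Or.inr hyu⟩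
  refine ⟨⟨by omega, by omega⟩, hulen ▸ locPer_eq_of_isRepWord hu ?_⟩
  rintro v ⟨hv, hxv, hyv⟩
  rcases suffix_and_prefix_or_of_length_le_succ (by omega) (by omega) hxv hyv with
    ⟨hxv, hyv⟩ | ⟨hxv, hyv⟩
  · exact absurd (List.take_append_drop M w ▸ append_infix_append_of_suffix_of_prefix hxv hyv)
      (hsf v hv)
  · exact hulen ▸
      per_le (List.take_append_drop M w ▸ hasPeriod_append_of_suffix_of_prefix hv hxv hyv)
end

section
/- Every unbordered square-free word w over the ternary alphabet {0,1,2} that begins with the prefix 01 and in which 01 occurs as a factor only once (namely as the prefix) has length |w| ≤ 13; moreover α = 0121021202102 is the unique such word of length 13. -/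
/-!
Every prefix of such a word is again square-free and contains `01` only at its start, so the
prefixes of length `n ≥ 2` are among the words obtained from `01` by appending letters one at a
time and discarding every word that violates one of the two conditions. Computing this tree
shows that it dies out at length 15, that its only word of length 14 is `01210212021020`, which
is bordered by `0`, and that its only word of length 13 is `α`.
-/

namespace CritFact

section Extensions

variable {α : Type*} (A : List α) (P : List α → Prop) [DecidablePred P]

def extensions (r : List α) : ℕ → List (List α)
  | 0 => [r]
  | n + 1 => ((extensions r n).flatMap fun u => A.map (u ++ [·])).filter P

variable {A P} in
theorem append_mem_extensions (hA : ∀ a, a ∈ A) (hP : ∀ u w, u <+: w → P w → P u)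
    (r v : List α) (hv : P (r ++ v)) : r ++ v ∈ extensions A P r v.length := by
  induction v using List.reverseRecOn with
  | nil => simp [extensions]
  | append_singleton v a ih =>
    rw [← List.append_assoc] at hv ⊢
    rw [List.length_append, List.length_singleton, extensions, List.mem_filter,
      List.mem_flatMap]
    exact ⟨⟨r ++ v, ih (hP _ _ (List.prefix_append _ _) hv), List.mem_map_of_mem (hA a)⟩,
      decide_eq_true hv⟩

end Extensions

section Factors

variable {α : Type*}

theorem sqFree_iff_forall_tails_inits (w : List α) :
    SqFree w ↔ ∀ x ∈ w.tails, ∀ v ∈ x.inits, v ≠ [] → ¬ v ++ v <+: x := by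
  simp only [List.mem_tails, List.mem_inits]
  constructor
  · intro h x hx v _ hv hvv
    exact h v hv (hvv.isInfix.trans hx.isInfix)
  · intro h v hv hvv
    obtain ⟨x, hvvx, hx⟩ := List.infix_iff_prefix_suffix.mp hvv
    exact h x hx v ((List.prefix_append v v).trans hvvx) hv hvvx

instance [DecidableEq α] : DecidablePred (SqFree (α := α)) := fun w =>
  decidable_of_iff' _ (sqFree_iff_forall_tails_inits w)

theorem SqFree.of_infix {u w : List α} (h : SqFree w) (huw : u <:+: w) : SqFree u :=
  fun v hv hvu => h v hv (hvu.trans huw)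

theorem not_infix_tail_of_forall_eq_append {u w : List α} (hu : u ≠ [])
    (h : ∀ s t, w = s ++ u ++ t → s = []) : ¬ u <:+: w.tail := by
  rintro ⟨s, t, hst⟩
  cases w with
  | nil => exact hu (List.infix_nil.mp ⟨s, t, hst⟩)
  | cons a w => exact List.cons_ne_nil a s (h (a :: s) t (by simp_all))

end Factors

def Admissible (w : Word) : Prop := SqFree w ∧ ¬ [0, 1] <:+: w.tail

instance : DecidablePred Admissible := fun _ => inferInstanceAs (Decidable (_ ∧ _))

theorem Admissible.of_prefix {u w : Word} (huw : u <+: w) (h : Admissible w) : Admissible u :=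
  ⟨h.1.of_infix huw.isInfix, fun h01 =>
    h.2 (h01.trans (by simpa only [List.drop_one] using (huw.drop 1).isInfix))⟩

theorem Admissible.mem_extensions {v : Word} (h : Admissible ([0, 1] ++ v)) :
    [0, 1] ++ v ∈ extensions (List.finRange 3) Admissible [0, 1] v.length :=
  append_mem_extensions List.mem_finRange (fun _ _ => Admissible.of_prefix) _ _ h

theorem extensions_13 : extensions (List.finRange 3) Admissible [0, 1] 13 = [] := by decide

theorem extensions_12 : extensions (List.finRange 3) Admissible [0, 1] 12 =
    [[0, 1, 2, 1, 0, 2, 1, 2, 0, 2, 1, 0, 2, 0]] := by decide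

theorem extensions_11 : extensions (List.finRange 3) Admissible [0, 1] 11 =
    [[0, 1, 2, 1, 0, 2, 1, 2, 0, 2, 1, 0, 2]] := by decide

end CritFact

/-- an unbordered square-free ternary word beginning with `01` in which
`01` occurs only as the prefix has length at most 13, and `α = 0121021202102` is the
unique such word of length 13. -/
theorem unbordered_unique_01_length_le_13 (w : CritFact.Word)
    (hub : CritFact.Unbordered w) (hsf : CritFact.SqFree w)
    (hpre : [0, 1] <+: w)
    (honce : ∀ s t : CritFact.Word, w = s ++ [0, 1] ++ t → s = []) :
    w.length ≤ 13 ∧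
    (w.length = 13 → w = [0, 1, 2, 1, 0, 2, 1, 2, 0, 2, 1, 0, 2]) := by
  obtain ⟨v, rfl⟩ := hpre
  have hw : CritFact.Admissible ([0, 1] ++ v) :=
    ⟨hsf, CritFact.not_infix_tail_of_forall_eq_append (List.cons_ne_nil _ _) honce⟩
  have hv : v.length ≤ 12 := by
    by_contra! hv
    have hpre13 : [0, 1] ++ v.take 13 <+: [0, 1] ++ v :=
      (List.prefix_append_right_inj _).mpr (v.take_prefix 13)
    have h := (hw.of_prefix hpre13).mem_extensions
    rw [List.length_take_of_le hv, CritFact.extensions_13] at h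
    exact List.not_mem_nil h
  have hv' : v.length ≠ 12 := by
    intro hv'
    have h := hw.mem_extensions
    rw [hv', CritFact.extensions_12, List.mem_singleton] at h
    exact hub [0] (by simp) (by simp [h]) ⟨by simp, by rw [h]; decide⟩
  refine ⟨?_, fun h13 => ?_⟩
  · simp only [List.length_append, List.length_cons, List.length_nil]
    omega
  have h := hw.mem_extensions
  rwa [show v.length = 11 by simpa using h13, CritFact.extensions_11, List.mem_singleton] at h
end

section
/- For every n ≥ 1, the word mₙ = τ^{2n−1}(0)·τ^{2n−3}(0)⋯τ³(0)·τ(0) has length |mₙ| = 4ⁿ − 1, and mₙ·0 is a prefix of the infinite word m; in particular each mₙ is square-free. -/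
/-!
The word `m` is the sequence of jumps of the Thue–Morse word `t`, and a square in `m` would give an
overlap in `t`.

The identity `τ (m[0, N)) = m[0, 2N + t N)` identifies `m` with the jump sequence. Since `t` is
`{0,1}`-valued, a square of period `L` in its jumps forces `t (i + L) = t i`, hence an overlap of
period `L` in `t`. And `t` is overlap-free: an overlap of even period `2q` at `i` descends to one of
period `q` at `i / 2` because `t (2n + b) = b xor t n`, while one of odd period `p` makes `t`
alternate on `[i, i + p]`, so that `t (i + p) ≠ t i`.

For the words `mₙ`, `mₙ₊₁ = τ²(mₙ) τ(0)`; as `t (4ⁿ) = 1`, `τ²` maps `mₙ 0 = m[0, 4ⁿ)` onto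
`m[0, 4ⁿ⁺¹ + 2)`, which gives `mₙ₊₁ 0 = m[0, 4ⁿ⁺¹)`.
-/

def thueMorse : ℕ → Bool
  | 0 => false
  | n + 1 => xor ((n + 1) % 2 == 1) (thueMorse ((n + 1) / 2))

@[simp]
theorem thueMorse_zero : thueMorse 0 = false := by
  rw [thueMorse]

theorem thueMorse_two_mul (n : ℕ) : thueMorse (2 * n) = thueMorse n := by
  rcases n with _ | n
  · rfl
  · rw [show 2 * (n + 1) = 2 * n + 1 + 1 by ring, thueMorse]
    simp [show (2 * n + 1 + 1) / 2 = n + 1 by omega, Nat.add_mod]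

theorem thueMorse_two_mul_add_one (n : ℕ) : thueMorse (2 * n + 1) = !thueMorse n := by
  rw [thueMorse]
  simp [show (2 * n + 1) / 2 = n by omega, Nat.add_mod]

theorem thueMorse_two_mul_add (n : ℕ) (b : Bool) :
    thueMorse (2 * n + b.toNat) = xor b (thueMorse n) := by
  cases b
  · simpa using thueMorse_two_mul n
  · simpa using thueMorse_two_mul_add_one n

theorem thueMorse_four_pow (n : ℕ) : thueMorse (4 ^ n) = true := by
  induction n with
  | zero => simpa using thueMorse_two_mul_add_one 0
  | succ n ih =>
    rw [show 4 ^ (n + 1) = 2 * (2 * 4 ^ n) by ring, thueMorse_two_mul, thueMorse_two_mul, ih]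

theorem thueMorse_overlap_div_two {i q : ℕ}
    (h : ∀ j ≤ 2 * q, thueMorse (i + j) = thueMorse (i + j + 2 * q)) :
    ∀ j ≤ q, thueMorse (i / 2 + j) = thueMorse (i / 2 + j + q) := by
  intro j hj
  obtain ⟨b, hb⟩ : ∃ b : Bool, i = 2 * (i / 2) + b.toNat :=
    ⟨i.bodd, by rw [← Nat.div2_val, ← Nat.bit_val, Nat.bit_bodd_div2]⟩
  have h₂ⱼ := h (2 * j) (by omega)
  rw [hb, show 2 * (i / 2) + b.toNat + 2 * j = 2 * (i / 2 + j) + b.toNat by ring,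
    show 2 * (i / 2 + j) + b.toNat + 2 * q = 2 * (i / 2 + j + q) + b.toNat by ring,
    thueMorse_two_mul_add, thueMorse_two_mul_add] at h₂ⱼ
  simpa using h₂ⱼ

theorem Bool.apply_add_eq_xor_bodd {t : ℕ → Bool} {i n : ℕ}
    (h : ∀ k < n, t (i + k + 1) = !t (i + k)) : t (i + n) = xor n.bodd (t i) := by
  induction n with
  | zero => simp
  | succ n ih =>
    rw [← add_assoc, h n n.lt_succ_self, ih fun k hk => h k (by omega)]
    simp [Nat.bodd_succ]

theorem thueMorse_alternating_of_overlap_odd {i r : ℕ}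
    (h : ∀ j ≤ 2 * r + 1, thueMorse (i + j) = thueMorse (i + j + (2 * r + 1))) :
    ∀ k < 2 * r + 1, thueMorse (i + k + 1) = !thueMorse (i + k) := by
  intro k hk
  obtain ⟨m, hm | hm⟩ := Nat.even_or_odd' (i + k)
  · rw [hm, thueMorse_two_mul_add_one, thueMorse_two_mul]
  · -- an odd position is carried by the period to an even one
    have h₀ := h k hk.le
    have h₁ := h (k + 1) hk
    rw [hm, show 2 * m + 1 + (2 * r + 1) = 2 * (m + r + 1) by ring] at h₀
    rw [← add_assoc, hm, show 2 * m + 1 + 1 + (2 * r + 1) = 2 * (m + r + 1) + 1 by ring] at h₁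
    rw [hm, h₀, h₁, thueMorse_two_mul_add_one, thueMorse_two_mul]

theorem thueMorse_overlapFree {p : ℕ} (hp : 0 < p) (i : ℕ) :
    ¬ ∀ j ≤ p, thueMorse (i + j) = thueMorse (i + j + p) := by
  induction p using Nat.strong_induction_on generalizing i with
  | _ p ih =>
  intro h
  obtain ⟨q, rfl | rfl⟩ := Nat.even_or_odd' p
  · exact ih q (by omega) (by omega) (i / 2) (thueMorse_overlap_div_two h)
  · have hflip := Bool.apply_add_eq_xor_bodd (thueMorse_alternating_of_overlap_odd h)
    have hper := h 0 (by omega)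
    rw [add_zero, hflip] at hper
    simp at hper

theorem Bool.overlap_of_square_jumps {t : ℕ → Bool} {i L : ℕ}
    (h : ∀ j < L, ((t (i + j + 1)).toNat : ℤ) - (t (i + j)).toNat =
      (t (i + j + L + 1)).toNat - (t (i + j + L)).toNat) :
    ∀ j ≤ L, t (i + j) = t (i + j + L) := by
  set z : ℕ → ℤ := fun k => (t k).toNat with hz
  have hshift : ∀ j ≤ L, z (i + j + L) - z (i + j) = z (i + L) - z i := by
    intro j hj
    induction j with
    | zero => simp
    | succ j ih =>
      have := h j (by omega)
      rw [show i + (j + 1) + L = i + j + L + 1 by ring, ← add_assoc]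
      linarith [ih (by omega)]
  -- `z (i + 2L) - z (i + L) = z (i + L) - z i` with values in `{0, 1}` forces the shift to be `0`
  have hbound : ∀ k, 0 ≤ z k ∧ z k ≤ 1 :=
    fun k => ⟨by positivity, by simp [hz, Bool.toNat_le]⟩
  have hL := hshift L le_rfl
  have h₀ := hbound i
  have h₁ := hbound (i + L)
  have h₂ := hbound (i + L + L)
  intro j hj
  have hzj : (t (i + j)).toNat = (t (i + j + L)).toNat := by
    have : z (i + j) = z (i + j + L) := by linarith [hshift j hj]
    simpa [hz] using this
  revert hzj
  cases t (i + j) <;> cases t (i + j + L) <;> decide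

/-- Letter `n` of `m`: the jump `t (n + 1) - t n ∈ {1, 0, -1}` of the Thue–Morse word `t`,
coded as `0, 1, 2`. -/
def thueMorseJump (n : ℕ) : Fin 3 :=
  if thueMorse n = thueMorse (n + 1) then 1 else if thueMorse n then 2 else 0

theorem thueMorseJump_add_toNat (n : ℕ) :
    (thueMorseJump n : ℕ) + (thueMorse (n + 1)).toNat = (thueMorse n).toNat + 1 := by
  unfold thueMorseJump
  cases thueMorse n <;> cases thueMorse (n + 1) <;> rfl

theorem thueMorseJump_squareFree (i L : ℕ) (hL : 0 < L) :
    ¬ ∀ j < L, thueMorseJump (i + j) = thueMorseJump (i + j + L) := by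
  intro h
  refine thueMorse_overlapFree hL i (Bool.overlap_of_square_jumps fun j hj => ?_)
  have h₁ := thueMorseJump_add_toNat (i + j)
  have h₂ := thueMorseJump_add_toNat (i + j + L)
  rw [h j hj] at h₁
  omega

namespace CritFact

theorem sqFree_map_range {α : Type*} {f : ℕ → α}
    (hf : ∀ i L, 0 < L → ¬ ∀ j < L, f (i + j) = f (i + j + L)) (N : ℕ) :
    SqFree ((List.range N).map f) := by
  intro v hv hinf
  obtain ⟨i, hlen, hget⟩ := List.infix_iff_getElem?.mp hinf
  refine hf i v.length (List.length_pos_iff.mpr hv) fun j hj => ?_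
  have hf_at : ∀ k, k < 2 * v.length → some (f (k + i)) = (v ++ v)[k]? := fun k hk => by
    simp only [List.length_append, List.length_map, List.length_range] at hlen
    have := hget k (by simp only [List.length_append]; omega)
    rw [List.getElem?_map, List.getElem?_range (by omega)] at this
    simp [Option.some_injective _ this]
  apply Option.some_injective
  rw [add_comm i j, hf_at j (by omega), add_right_comm, hf_at (j + v.length) (by omega),
    List.getElem?_append_left hj, List.getElem?_append_right (by omega), Nat.add_sub_cancel]

theorem tauW_append (u v : Word) : tauW (u ++ v) = tauW u ++ tauW v := by
  simp [tauW]

theorem tauW_singleton (a : Fin 3) : tauW [a] = tau a := by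
  simp [tauW]

theorem tauW_map_range_thueMorseJump (N : ℕ) :
    tauW ((List.range N).map thueMorseJump) =
      (List.range (2 * N + (thueMorse N).toNat)).map thueMorseJump := by
  induction N with
  | zero => simp [tauW]
  | succ N ih =>
    have h₀ := thueMorse_two_mul N
    have h₁ := thueMorse_two_mul_add_one N
    have h₂ := thueMorse_two_mul (N + 1)
    have h₃ := thueMorse_two_mul_add_one (N + 1)
    rw [mul_add, mul_one] at h₂ h₃
    rw [List.range_succ, List.map_append, tauW_append, ih, List.map_singleton, tauW_singleton]
    cases hx : thueMorse N <;> cases hy : thueMorse (N + 1) <;>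
      simp [List.range_succ, thueMorseJump, tau, hx, hy, h₀, h₁, h₂, h₃, mul_add]

theorem exists_iterate_tauW_eq_map_range (k : ℕ) :
    ∃ N, k < N ∧ tauW^[k] [0] = (List.range N).map thueMorseJump := by
  induction k with
  | zero => exact ⟨1, one_pos, by simp [thueMorseJump, thueMorse]⟩
  | succ k ih =>
    obtain ⟨N, hkN, hN⟩ := ih
    refine ⟨2 * N + (thueMorse N).toNat, by omega, ?_⟩
    rw [Function.iterate_succ_apply', hN, tauW_map_range_thueMorseJump]

theorem mInf_eq_thueMorseJump : mInf = thueMorseJump := by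
  funext n
  obtain ⟨N, hN, hiter⟩ := exists_iterate_tauW_eq_map_range (n + 1)
  have hn : n < ((List.range N).map thueMorseJump).length := by
    rw [List.length_map, List.length_range]
    omega
  rw [mInf, hiter, List.getD_eq_getElem _ _ hn]
  simp

theorem mWord_succ (n : ℕ) : mWord (n + 1) = tauW (tauW (mWord n)) ++ tau 0 := by
  induction n with
  | zero => rfl
  | succ n ih =>
    calc mWord (n + 2) = tauW^[2 * n + 3] [0] ++ mWord (n + 1) := rfl
      _ = tauW (tauW (tauW^[2 * n + 1] [0])) ++ (tauW (tauW (mWord n)) ++ tau 0) := by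
        rw [ih, Function.iterate_succ_apply', Function.iterate_succ_apply']
      _ = tauW (tauW (mWord (n + 1))) ++ tau 0 := by
        rw [show mWord (n + 1) = _ ++ mWord n from rfl, tauW_append, tauW_append,
          List.append_assoc]

theorem mWord_append_zero (n : ℕ) :
    mWord n ++ [0] = (List.range (4 ^ n)).map thueMorseJump := by
  induction n with
  | zero => simp [mWord, thueMorseJump, thueMorse]
  | succ n ih =>
    have hsq : tauW (tauW (mWord n ++ [0])) =
        (List.range (4 ^ (n + 1) + 2)).map thueMorseJump := by
      rw [ih, tauW_map_range_thueMorseJump, thueMorse_four_pow, tauW_map_range_thueMorseJump,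
        Bool.toNat_true, thueMorse_two_mul_add_one, thueMorse_four_pow, Bool.not_true,
        Bool.toNat_false]
      congr 2
      ring
    have hzero : tauW (tauW [0]) = tau 0 ++ [0, 2, 1] := rfl
    rw [mWord_succ, List.append_assoc]
    refine List.append_inj_left' (t₁ := [2, 1])
      (t₂ := [thueMorseJump (4 ^ (n + 1)), thueMorseJump (4 ^ (n + 1) + 1)]) ?_ rfl
    simpa [tauW_append, hzero, List.range_succ] using hsq

end CritFact

theorem mWord_length_prefix_squarefree_general (n : ℕ) :
    (CritFact.mWord n).length = 4 ^ n - 1 ∧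
    CritFact.mWord n ++ [0] = (List.range (4 ^ n)).map CritFact.mInf ∧
    CritFact.SqFree (CritFact.mWord n) := by
  have hprefix : CritFact.mWord n ++ [0] = (List.range (4 ^ n)).map CritFact.mInf := by
    rw [CritFact.mInf_eq_thueMorseJump, CritFact.mWord_append_zero]
  have hsqfree : CritFact.SqFree (CritFact.mWord n ++ [0]) := by
    rw [hprefix, CritFact.mInf_eq_thueMorseJump]
    exact CritFact.sqFree_map_range thueMorseJump_squareFree _
  refine ⟨?_, hprefix, fun v hv hsq => hsqfree v hv (hsq.trans (List.prefix_append _ _).isInfix)⟩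
  have hlength := congrArg List.length hprefix
  simp only [List.length_append, List.length_singleton, List.length_map, List.length_range]
    at hlength
  omega

/-- for `n ≥ 1`, `|mₙ| = 4ⁿ - 1`, `mₙ·0` is a prefix of the infinite
word `m`, and `mₙ` is square-free. -/
theorem mWord_length_prefix_squarefree (n : ℕ) (hn : 1 ≤ n) :
    (CritFact.mWord n).length = 4 ^ n - 1 ∧
    CritFact.mWord n ++ [0] = (List.range (4 ^ n)).map CritFact.mInf ∧
    CritFact.SqFree (CritFact.mWord n) :=
  mWord_length_prefix_squarefree_general n
end
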